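/- Let d^{AD}_n be the number of signed derangements σ in the even-signed permutation group D_n (signed permutations with an even number of negative entries and σ_i ≠ i for all i) whose type-D length ℓ_D(σ) is even. Then for all n ≥ 2, d^{AD}_n = n!·Σ_{k=0}^{n-2} 2^{n-k-2}(-1)^k/k! + (-1)^{n-1}(n-1). -/

import Mathlib

/-!
Write a signed permutation as `w = ε_T ∘ π` with `π ∈ S_n`, where `ε_T` is the identity word
`1, …, n` with the entries `k + 1`, `k ∈ T`, negated. The product `∏_{i<j} (w_j - w_i)` has sign
`(-1)^inv(w)`, and composing with `π` multiplies it by `sgn π`; hence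
`(-1)^inv(w) = sgn π · (-1)^inv(ε_T)`. Since `inv(ε_T) = ∑_{k ∈ T} k` is exactly the correction
term in `ℓ_D(w) = inv(w) + ∑_{k ∈ T} k`, `ℓ_D(w)` is even iff `π` is even. So `d^{AD}_n` counts
pairs `(π, T)` with `π` even, `|T|` even and every fixed point of `π` in `T`. Inclusion–exclusion
over the fixed points lying outside `T` reduces this to counting even permutations (`m!/2`) and
even subsets (`2^{m-1}`) of an `m`-element set; the last two terms of the alternating sum give
`(-1)^{n-1}(n-1)`.
-/

open Finset

/-- `w : Fin n → ℤ` is a signed permutation of `{1,…,n}`: the absolute values of its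
entries form a permutation of `{1,…,n}`. -/
def isSignedPerm (n : ℕ) (w : Fin n → ℤ) : Prop :=
  (∀ i, 1 ≤ (w i).natAbs ∧ (w i).natAbs ≤ n) ∧
    Function.Injective fun i => (w i).natAbs

/-- The inversion number of the word `w`, with respect to the usual order on `ℤ`. -/
def invW (n : ℕ) (w : Fin n → ℤ) : ℕ :=
  ((Finset.univ : Finset (Fin n × Fin n)).filter fun p => p.1 < p.2 ∧ w p.2 < w p.1).card

/-- The type-`B` length: `ℓ_B(w) = inv(w) - ∑_{i : w_i < 0} w_i`. -/
def lenB (n : ℕ) (w : Fin n → ℤ) : ℤ :=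
  (invW n w : ℤ) - ∑ i ∈ Finset.univ.filter (fun i : Fin n => w i < 0), w i

/-- `w` is a signed derangement: no entry satisfies `w_i = i` (in 1-indexed notation). -/
def isDerang (n : ℕ) (w : Fin n → ℤ) : Prop :=
  ∀ i : Fin n, w i ≠ ((i : ℕ) : ℤ) + 1

/-- The number of negative entries of `w`. -/
def negCount (n : ℕ) (w : Fin n → ℤ) : ℕ :=
  (Finset.univ.filter fun i : Fin n => w i < 0).card

/-- The type-`D` length: `ℓ_D(w) = inv(w) - ∑_{i : w_i < 0} (w_i + 1)`. -/
def lenD (n : ℕ) (w : Fin n → ℤ) : ℤ :=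
  (invW n w : ℤ) - ∑ i ∈ Finset.univ.filter (fun i : Fin n => w i < 0), (w i + 1)

/-- The number of signed derangements in the even-signed permutation group `D_n`
(signed permutations with an even number of negative entries) whose type-`D` length
is even. -/
noncomputable def dAD (n : ℕ) : ℕ :=
  Set.ncard {w : Fin n → ℤ |
    isSignedPerm n w ∧ Even (negCount n w) ∧ isDerang n w ∧ Even (lenD n w)}

open Equiv Equiv.Perm

section Inversions

variable {n : ℕ}

lemma prod_Ioi_eq_prod_filter_lt {M : Type*} [CommMonoid M] (f : Fin n → Fin n → M) :
    ∏ i, ∏ j ∈ Ioi i, f i j = ∏ p ∈ (univ : Finset (Fin n × Fin n)) with p.1 < p.2, f p.1 p.2 := by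
  rw [prod_filter, Fintype.prod_prod_type]
  refine prod_congr rfl fun i _ => ?_
  rw [← prod_filter]
  congr 1
  ext j
  simp

lemma prod_Ioi_ite_lt_eq_neg_one_pow_invW (w : Fin n → ℤ) :
    ∏ i, ∏ j ∈ Ioi i, (if w j < w i then (-1 : ℤ) else 1) = (-1) ^ invW n w := by
  rw [prod_Ioi_eq_prod_filter_lt, prod_ite, prod_const, prod_const_one, mul_one, invW,
    filter_filter]

lemma prod_sub_eq_neg_one_pow_invW_mul_abs (w : Fin n → ℤ) :
    ∏ i, ∏ j ∈ Ioi i, (w j - w i) = (-1) ^ invW n w * |∏ i, ∏ j ∈ Ioi i, (w j - w i)| := by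
  have hsplit : ∀ i j, w j - w i = (if w j < w i then -1 else 1) * |w j - w i| := by
    intro i j
    split_ifs with h
    · rw [abs_of_neg (sub_neg.2 h)]; ring
    · rw [abs_of_nonneg (sub_nonneg.2 (not_lt.1 h))]; ring
  simp_rw [abs_prod]
  conv_lhs => enter [2, i, 2, j]; rw [hsplit i j]
  simp_rw [prod_mul_distrib]
  rw [prod_Ioi_ite_lt_eq_neg_one_pow_invW]

lemma neg_one_pow_invW_comp (g : Fin n → ℤ) (hg : Function.Injective g) (π : Perm (Fin n)) :
    (-1 : ℤ) ^ invW n (g ∘ π) = sign π * (-1) ^ invW n g := by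
  set D := ∏ i, ∏ j ∈ Ioi i, (g j - g i)
  have hcomp : ∏ i, ∏ j ∈ Ioi i, (g (π j) - g (π i)) = sign π * D :=
    π.prod_Ioi_comp_eq_sign_mul_prod (f := fun a b => g b - g a) fun _ _ => by ring
  have hD : |D| ≠ 0 := abs_ne_zero.2 <| prod_ne_zero_iff.2 fun i _ =>
    prod_ne_zero_iff.2 fun j hj => sub_ne_zero.2 (hg.ne (mem_Ioi.1 hj).ne')
  have hcomp_sign := prod_sub_eq_neg_one_pow_invW_mul_abs (g ∘ π)
  have hsign := prod_sub_eq_neg_one_pow_invW_mul_abs g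
  simp only [Function.comp_apply] at hcomp_sign
  rw [hcomp, abs_mul, Int.abs_eq_natAbs (sign π), Int.units_natAbs,
    Nat.cast_one, one_mul] at hcomp_sign
  refine mul_right_cancel₀ hD ?_
  rw [← hcomp_sign, mul_assoc, ← hsign]

end Inversions

section SignedWords

variable {n : ℕ}

def signedIdentity (T : Finset (Fin n)) (k : Fin n) : ℤ :=
  if k ∈ T then -((k : ℕ) + 1) else (k : ℕ) + 1

lemma natAbs_signedIdentity (T : Finset (Fin n)) (k : Fin n) :
    (signedIdentity T k).natAbs = k + 1 := by
  unfold signedIdentity; split_ifs <;> omega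

lemma signedIdentity_neg_iff {T : Finset (Fin n)} {k : Fin n} :
    signedIdentity T k < 0 ↔ k ∈ T := by
  unfold signedIdentity
  split_ifs with h
  · exact iff_of_true (by omega) h
  · exact iff_of_false (by omega) h

lemma signedIdentity_injective (T : Finset (Fin n)) : Function.Injective (signedIdentity T) :=
  fun a b h => Fin.ext <| by simpa [natAbs_signedIdentity] using congrArg Int.natAbs h

lemma invW_signedIdentity (T : Finset (Fin n)) : invW n (signedIdentity T) = ∑ k ∈ T, (k : ℕ) := by
  have hpairs : ∀ a b : Fin n,
      a < b ∧ signedIdentity T b < signedIdentity T a ↔ a < b ∧ b ∈ T := by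
    intro a b
    rw [Fin.lt_def]
    by_cases ha : a ∈ T <;> by_cases hb : b ∈ T <;>
      simp only [signedIdentity, ha, hb, ↓reduceIte, and_true, and_false, iff_false, not_and] <;>
      omega
  simp only [invW, hpairs]
  calc #{p : Fin n × Fin n | p.1 < p.2 ∧ p.2 ∈ T} = #(T.sigma fun b => Iio b) :=
        card_nbij' (fun p => ⟨p.2, p.1⟩) (fun x => (x.2, x.1))
          (fun p hp => by simp_all) (fun x hx => by simp_all) (fun _ _ => rfl) (fun _ _ => rfl)
    _ = ∑ k ∈ T, (k : ℕ) := by simp [card_sigma]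

/-- Signs are recorded by absolute value rather than by position: `w i` has absolute value
`π i + 1` and is negative iff `π i ∈ T`, so that `w` is `signedIdentity T` composed with `π`. -/
def signedWord (q : Perm (Fin n) × Finset (Fin n)) : Fin n → ℤ :=
  signedIdentity q.2 ∘ q.1

lemma lenD_signedWord (q : Perm (Fin n) × Finset (Fin n)) :
    lenD n (signedWord q) = invW n (signedWord q) + invW n (signedIdentity q.2) := by
  have hneg : ∑ i with signedWord q i < 0, (signedWord q i + 1) = -∑ k ∈ q.2, ((k : ℕ) : ℤ) :=
    calc ∑ i with signedWord q i < 0, (signedWord q i + 1)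
        = ∑ i, (fun k => if k ∈ q.2 then -((k : ℕ) : ℤ) else 0) (q.1 i) := by
          rw [sum_filter]
          refine sum_congr rfl fun i _ => ?_
          simp only [signedWord, Function.comp_apply, signedIdentity_neg_iff]
          split_ifs with h <;> simp [signedIdentity, h]
      _ = ∑ k, if k ∈ q.2 then -((k : ℕ) : ℤ) else 0 :=
          Equiv.sum_comp q.1 (fun k => if k ∈ q.2 then -((k : ℕ) : ℤ) else 0)
      _ = -∑ k ∈ q.2, ((k : ℕ) : ℤ) := by
          rw [← sum_filter, filter_mem_eq_inter, univ_inter, sum_neg_distrib]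
  rw [lenD, hneg, invW_signedIdentity]
  push_cast
  ring

lemma even_lenD_signedWord_iff (q : Perm (Fin n) × Finset (Fin n)) :
    Even (lenD n (signedWord q)) ↔ sign q.1 = 1 := by
  have hpow : (-1 : ℤ) ^ (invW n (signedWord q) + invW n (signedIdentity q.2)) = sign q.1 := by
    rw [pow_add, signedWord, neg_one_pow_invW_comp _ (signedIdentity_injective _), mul_assoc,
      ← pow_add, Even.neg_one_pow ⟨_, rfl⟩, mul_one]
  rw [lenD_signedWord, ← Nat.cast_add, Int.even_coe_nat,
    ← neg_one_pow_eq_one_iff_even (R := ℤ) (by decide), hpow, Units.val_eq_one]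

lemma negCount_signedWord (q : Perm (Fin n) × Finset (Fin n)) :
    negCount n (signedWord q) = #q.2 := by
  simp only [negCount, signedWord, Function.comp_apply, signedIdentity_neg_iff]
  exact card_nbij' q.1 q.1.symm (fun i hi => by simp_all) (fun k hk => by simp_all)
    (fun i _ => by simp) (fun k _ => by simp)

lemma signedIdentity_eq_succ_iff {T : Finset (Fin n)} {k i : Fin n} :
    signedIdentity T k = (i : ℕ) + 1 ↔ k = i ∧ k ∉ T := by
  unfold signedIdentity
  split_ifs with h
  · exact iff_of_false (by omega) fun hk => hk.2 h
  · simp only [h, not_false_eq_true, and_true, Fin.ext_iff]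
    omega

lemma isDerang_signedWord_iff (q : Perm (Fin n) × Finset (Fin n)) :
    isDerang n (signedWord q) ↔ ∀ i, ¬(q.1 i = i ∧ i ∉ q.2) :=
  forall_congr' fun i => not_congr <|
    signedIdentity_eq_succ_iff.trans (and_congr_right fun h => by rw [h])

lemma signedWord_injective : Function.Injective (signedWord (n := n)) := by
  rintro ⟨π, T⟩ ⟨π', T'⟩ h
  have hπ : π = π' := Equiv.ext fun i => Fin.ext <| by
    simpa [signedWord, natAbs_signedIdentity] using congrArg Int.natAbs (congrFun h i)
  subst hπ
  have hT : ∀ k, k ∈ T ↔ k ∈ T' := fun k => by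
    simpa [signedWord, signedIdentity_neg_iff] using congrArg (· < 0) (congrFun h (π.symm k))
  rw [Finset.ext hT]

lemma range_signedWord : Set.range (signedWord (n := n)) = {w | isSignedPerm n w} := by
  ext w
  constructor
  · rintro ⟨q, rfl⟩
    refine ⟨fun i => ?_, fun i j h => q.1.injective (Fin.ext ?_)⟩
    · simp only [signedWord, Function.comp_apply, natAbs_signedIdentity]
      omega
    · simpa [signedWord, natAbs_signedIdentity] using h
  · rintro ⟨hbound, hinj⟩
    let f : Fin n → Fin n := fun i => ⟨(w i).natAbs - 1, by have := hbound i; omega⟩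
    have hf : Function.Injective f := fun i j h => hinj <| by
      have := hbound i; have := hbound j; simp only [f, Fin.ext_iff] at h
      show (w i).natAbs = (w j).natAbs; omega
    let π := Equiv.ofBijective f (Finite.injective_iff_bijective.mp hf)
    refine ⟨(π, ({k | w (π.symm k) < 0} : Finset (Fin n))), funext fun i => ?_⟩
    have := hbound i
    simp only [signedWord, signedIdentity, Function.comp_apply, mem_filter, mem_univ, true_and,
      symm_apply_apply]
    simp only [π, f, Equiv.ofBijective_apply]
    rcases Int.natAbs_eq (w i) with h | h <;> split_ifs <;> omega

end SignedWords

lemma two_mul_card_even_powerset {β : Type*} [DecidableEq β] (u : Finset β) :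
    2 * #{T ∈ u.powerset | Even #T} = 2 ^ #u + if u = ∅ then 1 else 0 := by
  have hadd := card_filter_add_card_filter_not (s := u.powerset) (fun T => Even #T)
  have hsub : (#{T ∈ u.powerset | Even #T} : ℤ) - #{T ∈ u.powerset | ¬Even #T} =
      if u = ∅ then 1 else 0 := by
    rw [← sum_powerset_neg_one_pow_card, ← sum_filter_add_sum_filter_not _ (fun T => Even #T),
      sum_congr rfl fun T hT => (mem_filter.1 hT).2.neg_one_pow,
      sum_congr rfl fun T hT => (Nat.not_even_iff_odd.1 (mem_filter.1 hT).2).neg_one_pow]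
    simp [sub_eq_add_neg]
  rw [card_powerset] at hadd
  split_ifs at hsub ⊢ <;> omega

section Counting

variable {α : Type*} [Fintype α] [DecidableEq α]

lemma two_mul_card_sign_eq_one [Nontrivial α] :
    2 * #{σ : Perm α | sign σ = 1} = (Fintype.card α).factorial := by
  rw [← Fintype.card_perm, ← two_mul_card_alternatingGroup, ← Fintype.card_subtype]
  exact congrArg _ (Fintype.card_congr (Equiv.refl _))

lemma card_sign_eq_one_of_subsingleton [Subsingleton α] : #{σ : Perm α | sign σ = 1} = 1 := by
  rw [filter_true_of_mem fun σ _ => by rw [Subsingleton.elim σ 1, map_one], card_univ,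
    Fintype.card_unique]

lemma card_sign_eq_one_supported (p : α → Prop) [DecidablePred p] :
    #{π : Perm α | sign π = 1 ∧ ∀ a, ¬p a → π a = a} = #{σ : Perm (Subtype p) | sign σ = 1} := by
  rw [← Fintype.card_subtype, ← Fintype.card_subtype]
  refine (Fintype.card_congr <|
    ((Perm.subtypeEquivSubtypePerm p).subtypeEquiv fun σ => ?_).trans <|
    (Equiv.subtypeSubtypeEquivSubtypeInter _ _).trans <|
    Equiv.subtypeEquivRight fun π => and_comm).symm
  simp [sign_ofSubtype]

/-- The number of pairs `(σ, T)` of an even permutation and an even-size subset of an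
`m`-element set. -/
def evenPairCount (m : ℕ) : ℕ :=
  if m ≤ 1 then 1 else m.factorial * 2 ^ (m - 2)

lemma filter_even_pairs_fixing_eq_product (t : Finset α) :
    ({q : Perm α × Finset α | (sign q.1 = 1 ∧ Even #q.2) ∧ ∀ i ∈ t, q.1 i = i ∧ i ∉ q.2} :
        Finset _) =
      ({π : Perm α | sign π = 1 ∧ ∀ a, ¬a ∉ t → π a = a} : Finset _) ×ˢ
        {T ∈ tᶜ.powerset | Even #T} := by
  ext ⟨π, T⟩
  simp only [mem_filter, mem_univ, true_and, mem_product, mem_powerset, not_not,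
    subset_compl_iff_disjoint_right, disjoint_left]
  constructor
  · rintro ⟨⟨hsign, heven⟩, h⟩
    exact ⟨⟨hsign, fun a ha => (h a ha).1⟩, fun a haT hat => (h a hat).2 haT, heven⟩
  · rintro ⟨⟨hsign, hfix⟩, hdisj, heven⟩
    exact ⟨⟨hsign, heven⟩, fun i hi => ⟨hfix i hi, fun hiT => hdisj hiT hi⟩⟩

lemma card_even_pairs_fixing_eq (t : Finset α) :
    #{q : Perm α × Finset α | (sign q.1 = 1 ∧ Even #q.2) ∧ ∀ i ∈ t, q.1 i = i ∧ i ∉ q.2} =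
      evenPairCount (Fintype.card α - #t) := by
  have hcard : Fintype.card {a // a ∉ t} = Fintype.card α - #t := by
    simp [Fintype.card_subtype_compl]
  have hsets := two_mul_card_even_powerset tᶜ
  have hempty : tᶜ = ∅ ↔ Fintype.card α - #t = 0 := by rw [← card_compl, card_eq_zero]
  simp only [hempty, card_compl] at hsets
  rw [filter_even_pairs_fixing_eq_product, card_product, card_sign_eq_one_supported,
    evenPairCount]
  split_ifs with hm
  · have : Subsingleton {a // a ∉ t} := Fintype.card_le_one_iff_subsingleton.1 (hcard ▸ hm)
    rw [card_sign_eq_one_of_subsingleton, one_mul]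
    generalize Fintype.card α - #t = m at hm hsets
    interval_cases m <;> split_ifs at hsets <;> omega
  · have : Nontrivial {a // a ∉ t} := Fintype.one_lt_card_iff_nontrivial.1 (by omega)
    have hperms := two_mul_card_sign_eq_one (α := {a // a ∉ t})
    rw [hcard] at hperms
    generalize Fintype.card α - #t = m at hm hsets hperms ⊢
    obtain ⟨k, rfl⟩ : ∃ k, m = k + 2 := ⟨m - 2, by omega⟩
    have hB : #{T ∈ tᶜ.powerset | Even #T} = 2 * 2 ^ k := by
      rw [if_neg (by omega), pow_succ, pow_succ] at hsets
      omega
    rw [hB, ← hperms, Nat.add_sub_cancel]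
    ring

end Counting

lemma inclusion_exclusion_card_filter_forall_not {α ι : Type*} [Fintype α] [DecidableEq α]
    [Fintype ι] (A : α → Prop) [DecidablePred A] (B : ι → α → Prop) [∀ i, DecidablePred (B i)] :
    (#{a | A a ∧ ∀ i, ¬B i a} : ℤ) =
      ∑ t : Finset ι, (-1 : ℤ) ^ #t * #{a | A a ∧ ∀ i ∈ t, B i a} := by
  have h := inclusion_exclusion_sum_inf_compl univ (fun i => ({a | B i a} : Finset α))
    (fun a => if A a then (1 : ℤ) else 0)
  simp only [sum_boole, powerset_univ, zsmul_eq_mul, Int.cast_id] at h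
  have hinf : ∀ t : Finset ι, ({a | A a ∧ ∀ i ∈ t, B i a} : Finset α) =
      {a ∈ t.inf fun i => ({a | B i a} : Finset α) | A a} := by
    intro t; ext a; simp [mem_inf, and_comm]
  have hcompl : ({a | A a ∧ ∀ i, ¬B i a} : Finset α) =
      {a ∈ univ.inf fun i => ({a | B i a} : Finset α)ᶜ | A a} := by
    ext a; simp [mem_inf, and_comm]
  rw [hcompl, h]
  simp only [hinf]

lemma dAD_eq_card (n : ℕ) :
    dAD n = #{q : Perm (Fin n) × Finset (Fin n) |
      (sign q.1 = 1 ∧ Even #q.2) ∧ ∀ i, ¬(q.1 i = i ∧ i ∉ q.2)} := by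
  have himage : {w | isSignedPerm n w ∧ Even (negCount n w) ∧ isDerang n w ∧ Even (lenD n w)} =
      signedWord ''
        (signedWord ⁻¹' {w | Even (negCount n w) ∧ isDerang n w ∧ Even (lenD n w)}) := by
    rw [Set.image_preimage_eq_range_inter, range_signedWord]
    rfl
  rw [dAD, himage, Set.ncard_image_of_injective _ signedWord_injective, ← Set.ncard_coe_finset]
  congr 1
  ext q
  simp only [Set.mem_preimage, Set.mem_ofPred_eq, coe_filter, mem_univ, true_and,
    negCount_signedWord, isDerang_signedWord_iff, even_lenD_signedWord_iff]
  tauto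

lemma dAD_eq_sum (n : ℕ) :
    (dAD n : ℤ) = ∑ k ∈ range (n + 1), (n.choose k : ℤ) * ((-1) ^ k * evenPairCount (n - k)) := by
  have hsum : ∑ t : Finset (Fin n), (-1 : ℤ) ^ #t * evenPairCount (n - #t) =
      ∑ k ∈ range (n + 1), (n.choose k : ℤ) * ((-1) ^ k * evenPairCount (n - k)) := by
    rw [← powerset_univ, sum_powerset_apply_card (fun k => (-1 : ℤ) ^ k * evenPairCount (n - k)),
      card_univ, Fintype.card_fin]
    simp only [nsmul_eq_mul]
  rw [dAD_eq_card, ← hsum]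
  -- `convert` absorbs the differing `Decidable` instances of the filters on the two sides.
  convert inclusion_exclusion_card_filter_forall_not
    (fun q : Perm (Fin n) × Finset (Fin n) => sign q.1 = 1 ∧ Even #q.2)
    (fun i q => q.1 i = i ∧ i ∉ q.2) using 4
  rename_i t _
  have h := card_even_pairs_fixing_eq t
  rw [Fintype.card_fin] at h
  rw [← h]
  congr!

lemma choose_mul_evenPairCount {m k : ℕ} (hk : k ≤ m) :
    ((m + 2).choose k : ℚ) * evenPairCount (m + 2 - k) =
      (m + 2).factorial * (2 ^ (m - k) / k.factorial) := by
  have hpair : evenPairCount (m + 2 - k) = (m + 2 - k).factorial * 2 ^ (m - k) := by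
    rw [evenPairCount, if_neg (by omega), show m + 2 - k - 2 = m - k by omega]
  rw [hpair, Nat.cast_choose ℚ (by omega : k ≤ m + 2)]
  push_cast
  field_simp

theorem stmt14 (n : ℕ) (hn : 2 ≤ n) :
    (dAD n : ℚ) = (n.factorial : ℚ) *
        (∑ k ∈ Finset.range (n - 1), (2 : ℚ) ^ (n - k - 2) * (-1 : ℚ) ^ k / (k.factorial : ℚ))
      + (-1 : ℚ) ^ (n - 1) * ((n : ℚ) - 1) := by
  obtain ⟨m, rfl⟩ : ∃ m, n = m + 2 := ⟨n - 2, by omega⟩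
  have hterms : ∀ k ∈ range (m + 1),
      ((m + 2).choose k : ℚ) * ((-1) ^ k * evenPairCount (m + 2 - k)) =
        (m + 2).factorial * (2 ^ (m + 2 - k - 2) * (-1) ^ k / k.factorial) := by
    intro k hk
    rw [mul_left_comm, choose_mul_evenPairCount (Nat.lt_succ_iff.1 (mem_range.1 hk)),
      show m + 2 - k - 2 = m - k by omega]
    ring
  have hpair_one : evenPairCount (m + 2 - (m + 1)) = 1 := by
    rw [show m + 2 - (m + 1) = 1 by omega]; rfl
  have hpair_zero : evenPairCount (m + 2 - (m + 2)) = 1 := by rw [Nat.sub_self]; rfl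
  have hsum := congrArg (Int.cast : ℤ → ℚ) (dAD_eq_sum (m + 2))
  push_cast at hsum
  rw [hsum, sum_range_succ, sum_range_succ, show m + 2 - 1 = m + 1 from rfl, mul_sum,
    sum_congr rfl hterms, hpair_one, hpair_zero, Nat.choose_succ_self_right, Nat.choose_self]
  push_cast
  ring
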